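/- Let G be an infinite group and N a normal subgroup of G. Suppose σ, τ are group topologies on G such that τ covers σ in the lattice 𝓛_G of group topologies on G. Then: (a) in the lattice 𝓛_{G/N} of group topologies on G/N, either σ/N = τ/N or τ/N covers σ/N; and (b) if moreover N is contained in the centre of G, then in the lattice 𝓛_N of group topologies on N, either σ|_N = τ|_N or τ|_N covers σ|_N. -/

import Mathlib

open OrderDual

/-- The lattice `𝓛_G` of all group topologies on `G`, ordered as in the paper:
`τ ≤ σ` iff `σ` is finer than `τ` (so the discrete topology is the top element).
This is the order dual of Mathlib's `GroupTopology G`. -/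
abbrev GroupTopLattice (G : Type*) [Group G] : Type _ := (GroupTopology G)ᵒᵈ

/-- The subspace group topology `τ|_N` on a subgroup `N`, as an element of `𝓛_N`. -/
def restrictTop {G : Type*} [Group G] (τ : GroupTopLattice G) (N : Subgroup G) :
    GroupTopLattice N :=
  toDual <|
    letI := (ofDual τ).toTopologicalSpace
    haveI := (ofDual τ).toIsTopologicalGroup
    ({ toTopologicalSpace := inferInstance, toIsTopologicalGroup := inferInstance } :
      GroupTopology N)

/-- The quotient group topology `τ/N` on `G ⧸ N`, for `N` a normal subgroup,
as an element of `𝓛_{G/N}`. -/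
def quotTop {G : Type*} [Group G] (τ : GroupTopLattice G) (N : Subgroup G) [N.Normal] :
    GroupTopLattice (G ⧸ N) :=
  toDual <|
    letI := (ofDual τ).toTopologicalSpace
    haveI := (ofDual τ).toIsTopologicalGroup
    ({ toTopologicalSpace := inferInstance, toIsTopologicalGroup := inferInstance } :
      GroupTopology (G ⧸ N))

/-! The maps `τ ↦ τ/N` and, for central `N`, `τ ↦ τ|_N` are monotone and map each interval
`[σ, τ]` of `𝓛_G` onto the interval between the images; a monotone map with this property sends
a cover to a cover or an equality.

For `q : G → G/N`, a group topology `ρ` between `σ/N` and `τ/N` is the image of the join of `σ`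
and `q⁻¹ρ`: as `q` is open, the neighbourhoods of `1` in that image are
`q(𝓝_σ 1 ⊓ q⁻¹ 𝓝_ρ 1) = 𝓝_{σ/N} 1 ⊓ 𝓝_ρ 1 = 𝓝_ρ 1`.

For central `N`, multiplication `G × N → G` is a surjective homomorphism, and a group topology
`ρ` between `σ|_N` and `τ|_N` is the restriction of the image of `τ × ρ` under it: if `n = g w`
with `g` near `1` for `τ` and `w` near `1` for `ρ`, then `g = n w⁻¹ ∈ N` is near `1` for `τ|_N`,
hence for `ρ`, and so is `n`. -/

open Filter Set Topology Function

theorem WCovBy.image_of_surjOn {α β : Type*} [PartialOrder α] [Preorder β] {f : α → β}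
    {a b : α} (hf : Monotone f) (hab : a ⩿ b) (hsurj : SurjOn f (Icc a b) (Icc (f a) (f b))) :
    f a ⩿ f b := by
  refine ⟨hf hab.le, fun c hac hcb => ?_⟩
  obtain ⟨x, ⟨hax, hxb⟩, rfl⟩ := hsurj ⟨hac.le, hcb.le⟩
  rcases hab.eq_or_eq hax hxb with rfl | rfl
  exacts [hac.false, hcb.false]

theorem coinduced_comp_le_coinduced {X Y Z : Type*} {t : TopologicalSpace X}
    {t' : TopologicalSpace Y} {s : X → Y} (f : Y → Z) (hs : Continuous[t, t'] s) :
    t.coinduced (f ∘ s) ≤ t'.coinduced f := by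
  rw [← coinduced_compose]
  exact coinduced_mono hs.coinduced_le

section
variable {A B : Type*} [Group A] [Group B]

theorem MonoidHom.isOpenQuotientMap_coinduced [TopologicalSpace A] [ContinuousMul A]
    (φ : A →* B) (hφ : Surjective φ) :
    @IsOpenQuotientMap A B _ (.coinduced φ ‹_›) φ :=
  letI := TopologicalSpace.coinduced φ ‹TopologicalSpace A›
  MonoidHom.isOpenQuotientMap_of_isQuotientMap ⟨⟨rfl⟩, hφ⟩

theorem MonoidHom.isTopologicalGroup_coinduced [TopologicalSpace A] [IsTopologicalGroup A]
    (φ : A →* B) (hφ : Surjective φ) :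
    @IsTopologicalGroup B (.coinduced φ ‹_›) _ := by
  let _ := TopologicalSpace.coinduced φ ‹TopologicalSpace A›
  have hq := φ.isOpenQuotientMap_coinduced hφ
  refine { continuous_mul := ?_, continuous_inv := ?_ }
  · rw [← (hq.prodMap hq).continuous_comp_iff]
    simpa only [comp_def, Prod.map, map_mul] using hq.continuous.comp continuous_mul
  · rw [← hq.continuous_comp_iff]
    simpa only [comp_def, map_inv] using hq.continuous.comp continuous_inv

namespace GroupTopology

def comap (φ : A →* B) (t : GroupTopology B) : GroupTopology A where
  toTopologicalSpace := t.toTopologicalSpace.induced φ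
  toIsTopologicalGroup :=
    letI := t.toTopologicalSpace
    haveI := t.toIsTopologicalGroup
    topologicalGroup_induced φ

def map (φ : A →* B) (hφ : Surjective φ) (t : GroupTopology A) : GroupTopology B where
  toTopologicalSpace := t.toTopologicalSpace.coinduced φ
  toIsTopologicalGroup :=
    letI := t.toTopologicalSpace
    haveI := t.toIsTopologicalGroup
    φ.isTopologicalGroup_coinduced hφ

def prod (s : GroupTopology A) (t : GroupTopology B) : GroupTopology (A × B) where
  toTopologicalSpace :=
    letI := s.toTopologicalSpace
    letI := t.toTopologicalSpace
    inferInstance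
  toIsTopologicalGroup :=
    letI := s.toTopologicalSpace
    letI := t.toTopologicalSpace
    haveI := s.toIsTopologicalGroup
    haveI := t.toIsTopologicalGroup
    inferInstance

variable {φ : A →* B}

theorem comap_mono : Monotone (comap φ) := fun _ _ h =>
  toTopologicalSpace_le.1 (induced_mono (toTopologicalSpace_le.2 h))

theorem prod_mono {s s' : GroupTopology A} {t t' : GroupTopology B} (hs : s ≤ s')
    (ht : t ≤ t') : s.prod t ≤ s'.prod t' := by
  simp only [← toTopologicalSpace_le] at *
  exact inf_le_inf (induced_mono hs) (induced_mono ht)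

theorem ext_nhds_one {s t : GroupTopology A}
    (h : @nhds A s.toTopologicalSpace 1 = @nhds A t.toTopologicalSpace 1) : s = t :=
  toTopologicalSpace_injective (s.toIsTopologicalGroup.ext t.toIsTopologicalGroup h)

theorem nhds_one_comap (t : GroupTopology B) :
    @nhds A (t.comap φ).toTopologicalSpace 1 =
      Filter.comap φ (@nhds B t.toTopologicalSpace 1) := by
  let _ := t.toTopologicalSpace
  rw [← map_one φ]
  exact nhds_induced φ 1

theorem nhds_one_prod (s : GroupTopology A) (t : GroupTopology B) :
    @nhds (A × B) (s.prod t).toTopologicalSpace 1 =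
      @nhds A s.toTopologicalSpace 1 ×ˢ @nhds B t.toTopologicalSpace 1 := by
  let _ := s.toTopologicalSpace
  let _ := t.toTopologicalSpace
  exact nhds_prod_eq

variable (hφ : Surjective φ)

theorem monotone_map : Monotone (map φ hφ) := fun _ _ h =>
  toTopologicalSpace_le.1 (coinduced_mono (toTopologicalSpace_le.2 h))

theorem map_le_iff_le_comap {s : GroupTopology A} {t : GroupTopology B} :
    s.map φ hφ ≤ t ↔ s ≤ t.comap φ := by
  simp only [← toTopologicalSpace_le]
  exact coinduced_le_iff_le_induced

theorem nhds_one_map (t : GroupTopology A) :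
    @nhds B (t.map φ hφ).toTopologicalSpace 1 =
      Filter.map φ (@nhds A t.toTopologicalSpace 1) := by
  let _ := t.toTopologicalSpace
  have _ := t.toIsTopologicalGroup
  let _ := (t.map φ hφ).toTopologicalSpace
  have h := (φ.isOpenQuotientMap_coinduced hφ).map_nhds_eq 1
  rw [map_one] at h
  exact h.symm

theorem map_inf_comap {s : GroupTopology A} {t : GroupTopology B} (hts : t ≤ s.map φ hφ) :
    (s ⊓ t.comap φ).map φ hφ = t := by
  refine ext_nhds_one ?_
  rw [nhds_one_map hφ, toTopologicalSpace_inf, nhds_inf, nhds_one_comap, Filter.push_pull,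
    ← nhds_one_map hφ, inf_eq_right]
  exact nhds_mono (toTopologicalSpace_le.2 hts)

end GroupTopology

end

namespace Subgroup

variable {G : Type*} [Group G] {N : Subgroup G}

def mulOfLeCenter (hN : N ≤ center G) : G × N →* G :=
  (MonoidHom.id G).noncommCoprod N.subtype fun g n => mem_center_iff.1 (hN n.2) g

@[simp]
theorem mulOfLeCenter_apply (hN : N ≤ center G) (x : G × N) :
    mulOfLeCenter hN x = x.1 * x.2 :=
  rfl

theorem mulOfLeCenter_surjective (hN : N ≤ center G) : Surjective (mulOfLeCenter hN) :=
  fun g => ⟨(g, 1), by simp⟩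

end Subgroup

namespace GroupTopology

variable {G : Type*} [Group G] {N : Subgroup G} (hN : N ≤ Subgroup.center G)
  {T : GroupTopology G} {R : GroupTopology N}

def mulCentral (hN : N ≤ Subgroup.center G) (T : GroupTopology G) (R : GroupTopology N) :
    GroupTopology G :=
  (T.prod R).map (N.mulOfLeCenter hN) (N.mulOfLeCenter_surjective hN)

theorem le_mulCentral : T ≤ mulCentral hN T R := by
  let _ := T.toTopologicalSpace
  let _ := R.toTopologicalSpace
  have hs : Continuous[T.toTopologicalSpace, (T.prod R).toTopologicalSpace]
      fun g => (g, (1 : N)) :=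
    continuous_id.prodMk continuous_const
  rw [← toTopologicalSpace_le]
  calc T.toTopologicalSpace
      = T.toTopologicalSpace.coinduced (N.mulOfLeCenter hN ∘ fun g => (g, 1)) := by
        rw [show (N.mulOfLeCenter hN ∘ fun g => (g, 1)) = id by ext; simp, coinduced_id]
    _ ≤ (mulCentral hN T R).toTopologicalSpace := coinduced_comp_le_coinduced _ hs

theorem le_comap_mulCentral : R ≤ (mulCentral hN T R).comap N.subtype := by
  let _ := T.toTopologicalSpace
  let _ := R.toTopologicalSpace
  have hs : Continuous[R.toTopologicalSpace, (T.prod R).toTopologicalSpace]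
      fun n => ((1 : G), n) :=
    continuous_const.prodMk continuous_id
  rw [← toTopologicalSpace_le]
  show _ ≤ TopologicalSpace.induced _ _
  rw [← coinduced_le_iff_le_induced]
  calc R.toTopologicalSpace.coinduced N.subtype
      = R.toTopologicalSpace.coinduced (N.mulOfLeCenter hN ∘ fun n => (1, n)) := by
        congr 1; ext; simp
    _ ≤ (mulCentral hN T R).toTopologicalSpace := coinduced_comp_le_coinduced _ hs

theorem mulCentral_le {S : GroupTopology G} (hTS : T ≤ S) (hRS : R ≤ S.comap N.subtype) :
    mulCentral hN T R ≤ S := by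
  refine (monotone_map _ (prod_mono hTS hRS)).trans ?_
  rw [← toTopologicalSpace_le]
  let _ := S.toTopologicalSpace
  have _ := S.toIsTopologicalGroup
  exact (continuous_fst.mul (continuous_subtype_val.comp continuous_snd)).coinduced_le

theorem comap_mulCentral (hTR : T.comap N.subtype ≤ R) :
    (mulCentral hN T R).comap N.subtype = R := by
  refine ext_nhds_one <| le_antisymm ?_ <|
    nhds_mono (toTopologicalSpace_le.2 (le_comap_mulCentral hN))
  rw [nhds_one_comap, mulCentral, nhds_one_map, nhds_one_prod]
  intro V hV
  let _ := R.toTopologicalSpace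
  have _ := R.toIsTopologicalGroup
  obtain ⟨W, hW, hWV⟩ := exists_nhds_one_split hV
  have hW' := nhds_mono (toTopologicalSpace_le.2 hTR) hW
  rw [nhds_one_comap] at hW'
  obtain ⟨U, hU, hUW⟩ := mem_comap.1 hW'
  refine mem_comap.2 ⟨_, image_mem_map (prod_mem_prod hU hW), ?_⟩
  rintro n ⟨⟨g, w⟩, ⟨hg, hw⟩, hgw⟩
  simp only [Subgroup.mulOfLeCenter_apply, Subgroup.coe_subtype] at hgw
  have hnw : n * w⁻¹ ∈ W := hUW <| show ((n * w⁻¹ : N) : G) ∈ U by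
    rw [Subgroup.coe_mul, ← hgw]
    simpa using hg
  simpa using hWV _ hnw _ hw

end GroupTopology

section

variable {G : Type*} [Group G]

theorem quotTop_mono (N : Subgroup G) [N.Normal] :
    Monotone (quotTop · N : GroupTopLattice G → _) := fun _ _ h =>
  toDual_le_toDual.2 (GroupTopology.monotone_map (QuotientGroup.mk'_surjective N) h)

theorem restrictTop_mono (N : Subgroup G) :
    Monotone (restrictTop · N : GroupTopLattice G → _) := fun _ _ h =>
  toDual_le_toDual.2 (GroupTopology.comap_mono (φ := N.subtype) h)

theorem surjOn_quotTop (N : Subgroup G) [N.Normal] {σ τ : GroupTopLattice G} (hστ : σ ≤ τ) :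
    SurjOn (quotTop · N) (Icc σ τ) (Icc (quotTop σ N) (quotTop τ N)) := by
  rintro ρ ⟨hσρ, hρτ⟩
  have hq := QuotientGroup.mk'_surjective N
  refine ⟨toDual (ofDual σ ⊓ (ofDual ρ).comap (QuotientGroup.mk' N)),
    ⟨le_toDual.2 inf_le_left, ?_⟩, congrArg toDual (GroupTopology.map_inf_comap hq hσρ)⟩
  exact toDual_le.2 (le_inf hστ ((GroupTopology.map_le_iff_le_comap hq).1 hρτ))

theorem surjOn_restrictTop {N : Subgroup G} (hN : N ≤ Subgroup.center G)
    {σ τ : GroupTopLattice G} (hστ : σ ≤ τ) :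
    SurjOn (restrictTop · N) (Icc σ τ) (Icc (restrictTop σ N) (restrictTop τ N)) := by
  rintro ρ ⟨hσρ, hρτ⟩
  exact ⟨toDual (GroupTopology.mulCentral hN (ofDual τ) (ofDual ρ)),
    ⟨GroupTopology.mulCentral_le hN hστ hσρ, GroupTopology.le_mulCentral hN⟩,
    congrArg toDual (GroupTopology.comap_mulCentral hN hρτ)⟩

end

theorem covBy_quot_and_restrict_general {G : Type*} [Group G]
    (N : Subgroup G) [N.Normal] (σ τ : GroupTopLattice G) (h : σ ⋖ τ) :
    (quotTop σ N = quotTop τ N ∨ quotTop σ N ⋖ quotTop τ N) ∧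
      (N ≤ Subgroup.center G →
        (restrictTop σ N = restrictTop τ N ∨ restrictTop σ N ⋖ restrictTop τ N)) := by
  simp only [← wcovBy_iff_eq_or_covBy]
  exact ⟨h.wcovBy.image_of_surjOn (f := (quotTop · N)) (quotTop_mono N) (surjOn_quotTop N h.le),
    fun hN => h.wcovBy.image_of_surjOn (f := (restrictTop · N)) (restrictTop_mono N)
      (surjOn_restrictTop hN h.le)⟩

/-- Let `G` be an infinite group and `N` a normal subgroup. Suppose `σ, τ`
are group topologies on `G` such that `τ` covers `σ` in the lattice `𝓛_G`. Then:
(a) in `𝓛_{G/N}`, either `σ/N = τ/N` or `τ/N` covers `σ/N`; and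
(b) if moreover `N` is contained in the centre of `G`, then in `𝓛_N`, either
`σ|_N = τ|_N` or `τ|_N` covers `σ|_N`. -/
theorem covBy_quot_and_restrict {G : Type*} [Group G] [Infinite G]
    (N : Subgroup G) [N.Normal] (σ τ : GroupTopLattice G) (h : σ ⋖ τ) :
    (quotTop σ N = quotTop τ N ∨ quotTop σ N ⋖ quotTop τ N) ∧
      (N ≤ Subgroup.center G →
        (restrictTop σ N = restrictTop τ N ∨ restrictTop σ N ⋖ restrictTop τ N)) :=
  covBy_quot_and_restrict_general N σ τ h
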